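/- Let c > 0, let α, β be real numbers, and let x ≥ c. Then ∫_c^x y^{-α} (x+c−y)^{-β} dy = (1/(c(x+c)))^{α+β−1} · ∫_c^x (y+c)^{α+β−2} (c^α y^{-α} + c^β y^{-β}) dy. -/

import Mathlib

/-!
Put `s = x + c`. Splitting `[c, x]` at the midpoint `s / 2` and reflecting the left half by
`t ↦ s - t` turns the left-hand side into `∫_{s/2}^x (t^{-α} (s-t)^{-β} + t^{-β} (s-t)^{-α}) dt`.
The Möbius substitution `t = s y / (y + c)` maps `[c, x]` onto `[s/2, x]`, with
`s - t = s c / (y + c)` and `dt = s c / (y + c)^2 dy`, and turns the first term into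
`(c s)^{1-α-β} c^α ∫_c^x (y + c)^{α+β-2} y^{-α} dy`, the second one likewise with `α` and `β`
exchanged.
-/

open Real Set MeasureTheory intervalIntegral

lemma ContinuousOn.rpow_mul_rpow {f g : ℝ → ℝ} {S : Set ℝ} (p q : ℝ) (hf : ContinuousOn f S)
    (hg : ContinuousOn g S) (hf₀ : ∀ t ∈ S, 0 < f t) (hg₀ : ∀ t ∈ S, 0 < g t) :
    ContinuousOn (fun t => f t ^ p * g t ^ q) S :=
  (hf.rpow_const fun t ht => Or.inl (hf₀ t ht).ne').mul
    (hg.rpow_const fun t ht => Or.inl (hg₀ t ht).ne')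

lemma continuousOn_rpow_mul_sub_rpow {a b s : ℝ} (p q : ℝ) (ha : 0 < a) (hb : b < s) :
    ContinuousOn (fun t => t ^ p * (s - t) ^ q) (Icc a b) :=
  .rpow_mul_rpow p q continuousOn_id (continuousOn_const.sub continuousOn_id)
    (fun t ht => ha.trans_le ht.1) (fun t ht => by linarith [ht.2])

lemma integral_eq_integral_from_midpoint_add_comp_sub {E : Type*} [NormedAddCommGroup E]
    [NormedSpace ℝ E] {f : ℝ → E} {a b : ℝ} (hf : IntervalIntegrable f volume a b) :
    ∫ t in a..b, f t = (∫ t in (a + b) / 2..b, f t) + ∫ t in (a + b) / 2..b, f (a + b - t) := by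
  have hmid : (a + b) / 2 ∈ uIcc a b := by
    rcases le_total a b with h | h
    · rw [uIcc_of_le h]; constructor <;> linarith
    · rw [uIcc_of_ge h]; constructor <;> linarith
  rw [integral_comp_sub_left, show a + b - b = a by ring,
    show a + b - (a + b) / 2 = (a + b) / 2 by ring, add_comm,
    integral_add_adjacent_intervals (hf.mono_set (uIcc_subset_uIcc_left hmid))
      (hf.mono_set (uIcc_subset_uIcc_right hmid))]

lemma rpow_mul_rpow_moebius_mul_deriv {s c y : ℝ} (α β : ℝ) (hs : 0 < s) (hc : 0 < c)
    (hy : 0 < y) :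
    (s * y / (y + c)) ^ (-α) * (s * c / (y + c)) ^ (-β) * (s * c / (y + c) ^ 2) =
      (1 / (c * s)) ^ (α + β - 1) * (c ^ α * ((y + c) ^ (α + β - 2) * y ^ (-α))) := by
  have hyc : 0 < y + c := by linarith
  rw [div_rpow (by positivity) hyc.le, div_rpow (by positivity) hyc.le, mul_rpow hs.le hy.le,
    mul_rpow hs.le hc.le, div_rpow zero_le_one (by positivity), one_rpow, mul_rpow hc.le hs.le,
    rpow_sub hc, rpow_sub hs, rpow_sub hyc, rpow_add hc, rpow_add hs, rpow_add hyc,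
    rpow_neg hs.le, rpow_neg hc.le, rpow_neg hy.le, rpow_neg hs.le, rpow_neg hyc.le,
    rpow_neg hyc.le, rpow_one, rpow_one, rpow_two]
  field_simp

lemma integral_from_midpoint_rpow_mul_sub_rpow {c x : ℝ} (α β : ℝ) (hc : 0 < c) (hx : c ≤ x) :
    ∫ t in (x + c) / 2..x, t ^ (-α) * (x + c - t) ^ (-β) =
      (1 / (c * (x + c))) ^ (α + β - 1) *
        (c ^ α * ∫ y in c..x, (y + c) ^ (α + β - 2) * y ^ (-α)) := by
  set s := x + c
  have hs : 0 < s := by linarith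
  have hcx : uIcc c x = Icc c x := uIcc_of_le hx
  have hpos : ∀ y ∈ Icc c x, 0 < y + c := fun y hy => by linarith [hy.1]
  have hderiv : ∀ y ∈ uIcc c x, HasDerivAt (fun y => s * y / (y + c)) (s * c / (y + c) ^ 2) y := by
    intro y hy
    rw [hcx] at hy
    have h : HasDerivAt (fun y => s * y / (y + c)) ((s * 1 * (y + c) - s * y * 1) / (y + c) ^ 2) y :=
      ((hasDerivAt_id' y).const_mul s).div ((hasDerivAt_id' y).add_const c) (hpos y hy).ne'
    convert h using 1
    ring
  have hmaps : (fun y => s * y / (y + c)) '' uIcc c x ⊆ Icc c x := by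
    rw [hcx]
    rintro _ ⟨y, hy, rfl⟩
    constructor
    · rw [le_div_iff₀ (hpos y hy)]; nlinarith [hy.1, hy.2]
    · rw [div_le_iff₀ (hpos y hy)]; nlinarith [hy.2]
  have hsubst := integral_comp_mul_deriv' hderiv
    (continuousOn_const.div (by fun_prop) fun y hy => pow_ne_zero 2 (hpos y (hcx ▸ hy)).ne')
    ((continuousOn_rpow_mul_sub_rpow (s := s) (-α) (-β) hc (by linarith)).mono hmaps)
  rw [show s * c / (c + c) = s / 2 by rw [← two_mul, mul_div_mul_right _ _ hc.ne'],
    show s * x / (x + c) = x from mul_div_cancel_left₀ x hs.ne']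
    at hsubst
  rw [← hsubst, ← intervalIntegral.integral_const_mul, ← intervalIntegral.integral_const_mul]
  refine integral_congr fun y hy => ?_
  rw [hcx] at hy
  have hcompl : s - s * y / (y + c) = s * c / (y + c) := by
    field_simp [(hpos y hy).ne']
    ring
  simp only [Function.comp, hcompl]
  exact rpow_mul_rpow_moebius_mul_deriv α β hs hc (hc.trans_le hy.1)

theorem stmt_3 (c α β x : ℝ) (hc : 0 < c) (hx : c ≤ x) :
    ∫ y in c..x, y ^ (-α) * (x + c - y) ^ (-β) =
      (1 / (c * (x + c))) ^ (α + β - 1) *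
        ∫ y in c..x, (y + c) ^ (α + β - 2) * (c ^ α * y ^ (-α) + c ^ β * y ^ (-β)) := by
  have hint : IntervalIntegrable (fun t => t ^ (-α) * (x + c - t) ^ (-β)) volume c x :=
    (continuousOn_rpow_mul_sub_rpow (-α) (-β) hc (by linarith)).intervalIntegrable_of_Icc hx
  have hintegrable : ∀ γ : ℝ,
      IntervalIntegrable (fun y => (y + c) ^ (α + β - 2) * y ^ (-γ)) volume c x :=
    fun γ => ContinuousOn.intervalIntegrable_of_Icc hx <|
      .rpow_mul_rpow (α + β - 2) (-γ) (continuousOn_id.add continuousOn_const) continuousOn_id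
        (fun t ht => by linarith [ht.1]) (fun t ht => hc.trans_le ht.1)
  have hβα := integral_from_midpoint_rpow_mul_sub_rpow β α hc hx
  rw [add_comm β α] at hβα
  rw [integral_eq_integral_from_midpoint_add_comp_sub hint, add_comm c x]
  simp only [sub_sub_cancel, mul_comm ((x + c - _) ^ (-α))]
  rw [integral_from_midpoint_rpow_mul_sub_rpow α β hc hx, hβα, ← mul_add,
    ← intervalIntegral.integral_const_mul, ← intervalIntegral.integral_const_mul,
    ← integral_add ((hintegrable α).const_mul _) ((hintegrable β).const_mul _)]
  congr 1
  exact integral_congr fun y _ => by ring
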